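/- arXiv:1405.4822 — 3 statements merged into one kernel-verified Lean document; each statement's English description precedes it below -/
import Mathlib

section
/- Let (α_i)_{i≥0} be a summable sequence of non-negative reals and define f : ℤ₊ ∪ {∞} → ℝ by f(n) = (∑_{i=0}^n α_i) − α_{n+1} for n ∈ ℤ₊ and f(∞) = ∑_{i=0}^∞ α_i. Then sup_n |f(n)| = f(∞); that is, ‖f‖_∞ = f(∞). -/
/-! Both the partial sum `∑_{i ≤ n} α_i` and `α_{n+1}` lie in `[0, f(∞)]`, so `|f(n)| ≤ f(∞)`;
and `f(n) → f(∞)` since `α_{n+1} → 0`, so the bound is the supremum. -/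

open Filter Topology

theorem ciSup_eq_of_forall_le_of_tendsto {ι α : Type*} [Nonempty ι] [Preorder ι] [IsDirectedOrder ι]
    [ConditionallyCompleteLinearOrder α] [TopologicalSpace α] [OrderClosedTopology α]
    {f : ι → α} {c : α} (hle : ∀ i, f i ≤ c) (hlim : Tendsto f atTop (𝓝 c)) :
    ⨆ i, f i = c :=
  IsLUB.ciSup_eq ⟨by rintro _ ⟨i, rfl⟩; exact hle i,
    fun _ hb ↦ le_of_tendsto' hlim fun i ↦ hb ⟨i, rfl⟩⟩

/-- For a summable sequence of non-negative reals `α` and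
`f(n) = (∑_{i=0}^n α_i) − α_{n+1}`, the supremum of `|f(n)|` over `n ∈ ℤ₊`
equals `f(∞) = ∑_i α_i`. -/
theorem stmt14 (α : ℕ → ℝ) (hα : ∀ i, 0 ≤ α i) (hsum : Summable α) :
    (⨆ n : ℕ, |(∑ i ∈ Finset.range (n + 1), α i) - α (n + 1)|) = ∑' i, α i := by
  have hlim : Tendsto (fun n ↦ (∑ i ∈ Finset.range (n + 1), α i) - α (n + 1)) atTop
      (𝓝 (∑' i, α i)) := by
    simpa using (hsum.hasSum.tendsto_sum_nat.comp (tendsto_add_atTop_nat 1)).sub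
      (hsum.tendsto_atTop_zero.comp (tendsto_add_atTop_nat 1))
  refine ciSup_eq_of_forall_le_of_tendsto (fun n ↦ ?_) ?_
  · exact abs_sub_le_of_nonneg_of_le (Finset.sum_nonneg fun i _ ↦ hα i)
      (hsum.sum_le_tsum _ fun i _ ↦ hα i) (hα _) (hsum.le_tsum _ fun i _ ↦ hα i)
  · simpa only [abs_of_nonneg (tsum_nonneg hα)] using hlim.abs
end

section
/- Let (α_i) be non-negative summable reals, f(n) = (∑_{i=0}^n α_i) − α_{n+1}, and r(n) = f(n)·2^{−(n+1)}. Then for every n ≥ 0: |r(n)| ≤ ∑_{k=n+1}^∞ r(k). -/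
/-!
Writing `S k = ∑_{i ≤ k} α i`, the identity `S (k + 1) = S k + α (k + 1)` gives
`r k = S k 2^{-k} - S (k + 1) 2^{-(k + 1)}`. Since `S` is bounded, these weighted partial sums are
summable, so the tail `∑_{k > n} r k` telescopes to `S (n + 1) 2^{-(n + 1)} = (S n + α (n + 1)) 2^{-(n + 1)}`,
which dominates `|r n| = |S n - α (n + 1)| 2^{-(n + 1)}` because `S n` and `α (n + 1)` are non-negative.
-/

open Finset

section Telescoping

variable {G : Type*} [AddCommGroup G] [TopologicalSpace G] [IsTopologicalAddGroup G] {g : ℕ → G}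

theorem hasSum_sub_succ (hg : Summable g) : HasSum (fun k => g k - g (k + 1)) (g 0) := by
  have := hg.hasSum.sub ((hasSum_nat_add_iff' 1).2 hg.hasSum)
  simpa using this

theorem hasSum_sub_succ_add (hg : Summable g) (m : ℕ) :
    HasSum (fun k => g (m + k) - g (m + k + 1)) (g m) := by
  have hgm : Summable fun k => g (m + k) := by
    simpa only [add_comm] using (summable_nat_add_iff m).2 hg
  exact hasSum_sub_succ hgm

end Telescoping

theorem summable_mul_geometric_of_isBounded {u : ℕ → ℝ} (hu : Bornology.IsBounded (Set.range u))
    {q : ℝ} (hq₀ : 0 ≤ q) (hq₁ : q < 1) : Summable fun k => u k * q ^ k := by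
  obtain ⟨C, hC⟩ := isBounded_iff_forall_norm_le.1 hu
  refine .of_norm_bounded ((summable_geometric_of_lt_one hq₀ hq₁).mul_left C) fun k => ?_
  rw [norm_mul, norm_pow, Real.norm_of_nonneg hq₀]
  gcongr
  exact hC _ (Set.mem_range_self k)

theorem rpow_neg_natCast_add_one {x : ℝ} (hx : 0 ≤ x) (n : ℕ) :
    x ^ (-((n : ℝ) + 1)) = x⁻¹ ^ (n + 1) := by
  rw [← Nat.cast_add_one, Real.rpow_neg hx, Real.rpow_natCast, inv_pow]

noncomputable def halvedPartialSum (α : ℕ → ℝ) (k : ℕ) : ℝ :=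
  (∑ i ∈ range (k + 1), α i) * 2⁻¹ ^ k

theorem halvedPartialSum_sub_succ (α : ℕ → ℝ) (k : ℕ) :
    halvedPartialSum α k - halvedPartialSum α (k + 1) =
      ((∑ i ∈ range (k + 1), α i) - α (k + 1)) * 2⁻¹ ^ (k + 1) := by
  rw [halvedPartialSum, halvedPartialSum, sum_range_succ _ (k + 1), pow_succ]
  ring

theorem summable_halvedPartialSum {α : ℕ → ℝ} (hα : Summable α) :
    Summable (halvedPartialSum α) := by
  have hbdd : Bornology.IsBounded (Set.range fun k => ∑ i ∈ range (k + 1), α i) :=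
    Metric.isBounded_range_of_tendsto _ ((Filter.tendsto_add_atTop_iff_nat 1).2 hα.hasSum.tendsto_sum_nat)
  exact summable_mul_geometric_of_isBounded hbdd (by norm_num) (by norm_num)

theorem abs_sub_mul_le_halvedPartialSum_succ {α : ℕ → ℝ} (hα : ∀ i, 0 ≤ α i) (n : ℕ) :
    |(∑ i ∈ range (n + 1), α i) - α (n + 1)| * 2⁻¹ ^ (n + 1) ≤ halvedPartialSum α (n + 1) := by
  have hS : 0 ≤ ∑ i ∈ range (n + 1), α i := sum_nonneg fun i _ => hα i
  rw [halvedPartialSum, sum_range_succ _ (n + 1)]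
  gcongr
  exact abs_sub_le_iff.2 ⟨by linarith [hα (n + 1)], by linarith⟩

/-- For non-negative summable `α`, `f(n) = (∑_{i=0}^n α_i) − α_{n+1}` and
`r(n) = f(n)·2^{−(n+1)}`, the tail inequalities
`|r(n)| ≤ ∑_{k>n} r(k)` hold for every `n`. -/
theorem stmt15 (α : ℕ → ℝ) (hα : ∀ i, 0 ≤ α i) (hsum : Summable α)
    (r : ℕ → ℝ)
    (hr : ∀ n : ℕ, r n =
      ((∑ i ∈ Finset.range (n + 1), α i) - α (n + 1)) * (2 : ℝ) ^ (-((n : ℝ) + 1))) :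
    ∀ n : ℕ, |r n| ≤ ∑' k : ℕ, r (n + 1 + k) := by
  have hr' : ∀ k, r k = halvedPartialSum α k - halvedPartialSum α (k + 1) := fun k => by
    rw [hr, rpow_neg_natCast_add_one zero_le_two, halvedPartialSum_sub_succ]
  intro n
  have htail : ∑' k, r (n + 1 + k) = halvedPartialSum α (n + 1) := by
    simp only [hr']
    exact (hasSum_sub_succ_add (summable_halvedPartialSum hsum) (n + 1)).tsum_eq
  rw [htail, hr, rpow_neg_natCast_add_one zero_le_two, abs_mul,
    abs_of_nonneg (by positivity : (0 : ℝ) ≤ 2⁻¹ ^ (n + 1))]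
  exact abs_sub_mul_le_halvedPartialSum_succ hα n
end

section
/- Let (U_n) be a decreasing sequence of measurable symmetric neighbourhoods of the identity in a non-discrete locally compact measure space with measure ω, with 0 < ω(U_n) < 1/n. Set λ_n = 1/(n·ω(U_n)) and f = ∑_n λ_n · (1_{U_n} * 1_{U_n}) where ‖1_{U_n} * 1_{U_n}‖₁ = ω(U_n)². Then ‖f‖₁ ≤ ∑_n 1/n² < ∞, while f(e) ≥ ∑_n λ_n (1_{U_n}*1_{U_n})(e) = ∑_n λ_n ω(U_n) = ∑_n 1/n = ∞. -/
open MeasureTheory NNReal ENNReal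

/-!
The weights `λₙ = ((n + 1) ω(Uₙ))⁻¹` are chosen so that `λₙ ω(Uₙ) = (n + 1)⁻¹`. Hence the `n`-th
term of `f(e)` is `(n + 1)⁻¹`, giving the divergent harmonic series, while by monotone convergence
the `n`-th term of `‖f‖₁` is `λₙ ω(Uₙ)² = (n + 1)⁻¹ ω(Uₙ) ≤ (n + 1)⁻²`, a convergent `p`-series.
-/

theorem ENNReal.tsum_inv_natCast_add_one_pow_ne_top_iff {p : ℕ} :
    ∑' n : ℕ, (((n : ℝ≥0∞) + 1) ^ p)⁻¹ ≠ ∞ ↔ 1 < p := by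
  have hcoe : ∀ n : ℕ, (((n : ℝ≥0∞) + 1) ^ p)⁻¹ = ↑((((n + 1 : ℕ) : ℝ≥0) ^ p)⁻¹) := fun n => by
    rw [ENNReal.coe_inv (by positivity)]; push_cast; rfl
  rw [tsum_congr hcoe, ENNReal.tsum_coe_ne_top_iff_summable,
    NNReal.summable_nat_add_iff 1 (f := fun n : ℕ => ((n : ℝ≥0) ^ p)⁻¹), ← NNReal.summable_coe]
  push_cast
  exact Real.summable_nat_pow_inv

theorem ENNReal.inv_mul_mul_cancel_right {a b : ℝ≥0∞} (hb₀ : b ≠ 0) (hb : b ≠ ∞) :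
    (a * b)⁻¹ * b = a⁻¹ := by
  rw [ENNReal.mul_inv (Or.inr hb) (Or.inr hb₀), mul_assoc, ENNReal.inv_mul_cancel hb₀ hb, mul_one]

theorem MeasureTheory.lintegral_tsum_const_mul {α ι : Type*} [MeasurableSpace α] [Countable ι]
    {μ : Measure α} {f : ι → α → ℝ≥0∞} (hf : ∀ i, Measurable (f i)) (c : ι → ℝ≥0∞) :
    ∫⁻ x, ∑' i, c i * f i x ∂μ = ∑' i, c i * ∫⁻ x, f i x ∂μ := by
  rw [lintegral_tsum fun i => ((hf i).const_mul _).aemeasurable]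
  exact tsum_congr fun i => lintegral_const_mul _ (hf i)

theorem stmt18_general {X : Type*} [MeasurableSpace X] (ω : Measure X) (e : X)
    (U : ℕ → Set X)
    (hpos : ∀ n : ℕ, 0 < ω (U n))
    (hsmall : ∀ n : ℕ, ω (U n) < 1 / ((n : ENNReal) + 1))
    (g : ℕ → X → ENNReal) (hg : ∀ n, Measurable (g n))
    (hgint : ∀ n, ∫⁻ x, g n x ∂ω = ω (U n) ^ 2)
    (hge : ∀ n, g n e = ω (U n)) :
    (∫⁻ x, ∑' n : ℕ, (((n : ENNReal) + 1) * ω (U n))⁻¹ * g n x ∂ω) ≤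
        (∑' n : ℕ, (((n : ENNReal) + 1) ^ 2)⁻¹) ∧
      (∑' n : ℕ, (((n : ENNReal) + 1) ^ 2)⁻¹) < ⊤ ∧
      (∑' n : ℕ, (((n : ENNReal) + 1) * ω (U n))⁻¹ * g n e) = ⊤ := by
  have hle : ∀ n : ℕ, ω (U n) ≤ ((n : ℝ≥0∞) + 1)⁻¹ := fun n => by
    simpa only [one_div] using (hsmall n).le
  have hweight : ∀ n : ℕ, (((n : ℝ≥0∞) + 1) * ω (U n))⁻¹ * ω (U n) = ((n : ℝ≥0∞) + 1)⁻¹ :=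
    fun n => ENNReal.inv_mul_mul_cancel_right (hpos n).ne' ((hsmall n).trans_le le_top).ne
  refine ⟨?_, lt_top_iff_ne_top.2 (ENNReal.tsum_inv_natCast_add_one_pow_ne_top_iff.2 one_lt_two), ?_⟩
  · calc ∫⁻ x, ∑' n : ℕ, (((n : ℝ≥0∞) + 1) * ω (U n))⁻¹ * g n x ∂ω
        = ∑' n : ℕ, ((n : ℝ≥0∞) + 1)⁻¹ * ω (U n) := by
          rw [lintegral_tsum_const_mul hg]
          simp only [hgint, sq, ← mul_assoc, hweight]
      _ ≤ ∑' n : ℕ, ((n : ℝ≥0∞) + 1)⁻¹ * ((n : ℝ≥0∞) + 1)⁻¹ :=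
          ENNReal.tsum_le_tsum fun n => mul_le_mul_right (hle n) _
      _ = ∑' n : ℕ, (((n : ℝ≥0∞) + 1) ^ 2)⁻¹ := by simp_rw [ENNReal.inv_pow, sq]
  · simp only [hge, hweight]
    simpa using (ENNReal.tsum_inv_natCast_add_one_pow_ne_top_iff (p := 1)).not.2 (lt_irrefl 1)

/-- The construction of an unbounded integrable function of positive type:
with `U_n` decreasing sets of measure `ω(U_n) < 1/n`, `λ_n = 1/(n ω(U_n))`,
and `g_n = 1_{U_n} * 1_{U_n}` (so `∫ g_n dω = ω(U_n)²` and `g_n(e) = ω(U_n)`),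
the function `f = ∑_n λ_n g_n` satisfies `‖f‖₁ ≤ ∑_n 1/n² < ∞` while
`f(e) = ∑_n λ_n ω(U_n) = ∑_n 1/n = ∞`. (Indices shifted: `n ≥ 1` is `n+1`.) -/
theorem stmt18 {X : Type*} [MeasurableSpace X] (ω : Measure X) (e : X)
    (U : ℕ → Set X) (hU : ∀ n, MeasurableSet (U n)) (hdec : ∀ n, U (n + 1) ⊆ U n)
    (hpos : ∀ n : ℕ, 0 < ω (U n))
    (hsmall : ∀ n : ℕ, ω (U n) < 1 / ((n : ENNReal) + 1))
    (g : ℕ → X → ENNReal) (hg : ∀ n, Measurable (g n))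
    (hgint : ∀ n, ∫⁻ x, g n x ∂ω = ω (U n) ^ 2)
    (hge : ∀ n, g n e = ω (U n)) :
    (∫⁻ x, ∑' n : ℕ, (((n : ENNReal) + 1) * ω (U n))⁻¹ * g n x ∂ω) ≤
        (∑' n : ℕ, (((n : ENNReal) + 1) ^ 2)⁻¹) ∧
      (∑' n : ℕ, (((n : ENNReal) + 1) ^ 2)⁻¹) < ⊤ ∧
      (∑' n : ℕ, (((n : ENNReal) + 1) * ω (U n))⁻¹ * g n e) = ⊤ :=
  stmt18_general ω e U hpos hsmall g hg hgint hge
end
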